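/- arXiv:2309.10104 — 2 statements merged into one kernel-verified Lean document; each statement's English description precedes it below -/
import Mathlib

section
/- Let (E,w,d) be an ultra triple with E finite, r ≥ 0, and let A, B ⊆ E with |A| = |B| + 1. Then there exists u ∈ A \ B such that per_r(A \ {u}) + per_r(B ∪ {u}) ≥ per_r(A) + per_r(B). -/
open Finset

noncomputable def distR {E : Type*} [DecidableEq E] (d : E → E → ℝ) (r : ℕ)
    (C : Finset E) (v : E) : ℝ :=
  if C.card ≤ r then 0
  else sSup {s : ℝ | ∃ A ⊆ C, A.card = C.card - r ∧ s = ∑ x ∈ A, d v x}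

noncomputable def perList {E : Type*} [DecidableEq E] (w : E → ℝ) (d : E → E → ℝ)
    (r : ℕ) : List E → ℝ
  | [] => 0
  | a :: l => perList w d r l + w a + distR d r l.toFinset a

noncomputable def perR {E : Type*} [DecidableEq E] (w : E → ℝ) (d : E → E → ℝ)
    (r : ℕ) (A : Finset E) : ℝ := perList w d r A.toList

/-- `b` is a projection of `c` onto the finite set `A`. -/
def IsProj {E : Type*} [DecidableEq E] (d : E → E → ℝ) (A : Finset E) (c b : E) : Prop :=
  (c ∈ A ∧ b = c) ∨ (c ∉ A ∧ b ∈ A ∧ ∀ x ∈ A, d c b ≤ d c x)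

/-- `v` is a sequential projection of the ordered set `c` (of length `k`) onto `A`. -/
def IsSeqProj {E : Type*} [DecidableEq E] (d : E → E → ℝ) (A : Finset E)
    (k : ℕ) (c v : ℕ → E) : Prop :=
  ∀ i < k, IsProj d (A \ (Finset.range i).image v) (c i) (v i)

/-- `c` is a greedy `r`-removed `m`-permutation of `C`. -/
def IsGreedy {E : Type*} [DecidableEq E] (w : E → ℝ) (d : E → E → ℝ) (r : ℕ)
    (C : Finset E) (m : ℕ) (c : ℕ → E) : Prop :=
  (∀ i < m, c i ∈ C) ∧ (∀ i < m, ∀ j < m, c i = c j → i = j) ∧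
  ∀ i < m, ∀ x ∈ C, x ∉ (Finset.range i).image c →
    perR w d r (insert x ((Finset.range i).image c)) ≤
      perR w d r (insert (c i) ((Finset.range i).image c))

noncomputable def distF {E : Type*} [DecidableEq E] (d : E → E → ℝ)
    (f : ℕ → ℝ → ℝ) (C : Finset E) (x : E) : ℝ :=
  let l := (C.toList.map (fun c => d x c)).insertionSort (· ≤ ·)
  ∑ i ∈ Finset.range l.length, f (i + 1) (l.getD i 0)

/-!
Since `per_r` does not depend on the ordering,
`per_r A = per_r (A \ {u}) + w u + dist_r (A \ {u}) u` and
`per_r (B ∪ {u}) = per_r B + w u + dist_r B u`, so it suffices to find `u ∈ A \ B` with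
`dist_r (A \ {u}) u ≤ dist_r B u`. This holds when, for every `t`, no more points of `A \ {u}`
than of `B` are at distance `≥ t` from `u`; as `|A| = |B| + 1`, this says that every ball around
`u` contains more points of `A` than of `B`, and in an ultrametric space such a `u` exists.
-/

section Distances

variable {E : Type*} [DecidableEq E] {d : E → E → ℝ}

theorem card_filter_eq_card_filter_erase_add {s : Finset E} {x : E} (hx : x ∈ s)
    (p : E → Prop) [DecidablePred p] :
    #(s.filter p) = #((s.erase x).filter p) + if p x then 1 else 0 := by
  rw [card_filter, card_filter, ← sum_erase_add _ _ hx]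

/-- Cancel a common point of `A` and `B`, or else the closest pair `(a, b) ∈ A × B`: by the
ultrametric inequality, a ball around another point of `A` that contains `b` also contains `a`. -/
theorem exists_mem_sdiff_forall_card_filter_lt
    (hultra : ∀ a b c : E, a ≠ b → a ≠ c → b ≠ c → d a b ≤ max (d a c) (d b c))
    {A B : Finset E} (h : #B < #A) :
    ∃ u ∈ A \ B, ∀ t : ℝ,
      #(B.filter (fun x => x = u ∨ d u x < t)) < #(A.filter (fun x => x = u ∨ d u x < t)) := by
  induction B using Finset.strongInduction generalizing A with
  | H B ih =>
  rcases B.eq_empty_or_nonempty with rfl | hB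
  · obtain ⟨u, hu⟩ : A.Nonempty := card_pos.mp (by simpa using h)
    refine ⟨u, by simpa using hu, fun t => ?_⟩
    simpa using card_pos.mpr ⟨u, mem_filter.mpr ⟨hu, Or.inl rfl⟩⟩
  by_cases hAB : (A ∩ B).Nonempty
  · obtain ⟨x, hx⟩ := hAB
    obtain ⟨hxA, hxB⟩ := mem_inter.mp hx
    have hlt : #(B.erase x) < #(A.erase x) := by
      rw [card_erase_of_mem hxA, card_erase_of_mem hxB]
      have := card_pos.mpr ⟨x, hxB⟩
      omega
    obtain ⟨u, hu, hball⟩ := ih (B.erase x) (erase_ssubset hxB) hlt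
    simp only [mem_sdiff, mem_erase, not_and] at hu
    refine ⟨u, mem_sdiff.mpr ⟨hu.1.2, fun huB => hu.2 hu.1.1 huB⟩, fun t => ?_⟩
    have := hball t
    rw [card_filter_eq_card_filter_erase_add hxA, card_filter_eq_card_filter_erase_add hxB]
    omega
  · have hdisj : Disjoint A B := disjoint_iff_inter_eq_empty.mpr (not_nonempty_iff_eq_empty.mp hAB)
    have hA : A.Nonempty := card_pos.mp (by omega)
    obtain ⟨⟨a, b⟩, hab, hmin⟩ :=
      (A ×ˢ B).exists_min_image (fun p => d p.1 p.2) (hA.product hB)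
    obtain ⟨haA, hbB⟩ := mem_product.mp hab
    dsimp only at haA hbB hmin
    have hlt : #(B.erase b) < #(A.erase a) := by
      rw [card_erase_of_mem haA, card_erase_of_mem hbB]
      have := card_pos.mpr hB
      omega
    obtain ⟨u, hu, hball⟩ := ih (B.erase b) (erase_ssubset hbB) hlt
    obtain ⟨hua, huA⟩ := mem_erase.mp (mem_sdiff.mp hu).1
    have huB : u ∉ B := disjoint_left.mp hdisj huA
    refine ⟨u, mem_sdiff.mpr ⟨huA, huB⟩, fun t => ?_⟩
    have hnear : (b = u ∨ d u b < t) → (a = u ∨ d u a < t) := by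
      rintro (rfl | hb)
      · exact absurd hbB huB
      have hba : d a b ≤ d u b := hmin (u, b) (mem_product.mpr ⟨huA, hbB⟩)
      have hult := hultra u a b hua (fun h => huB (h ▸ hbB))
        (fun h => disjoint_left.mp hdisj haA (h ▸ hbB))
      exact Or.inr ((hult.trans (max_le le_rfl hba)).trans_lt hb)
    have := hball t
    rw [card_filter_eq_card_filter_erase_add haA, card_filter_eq_card_filter_erase_add hbB]
    split_ifs with hb ha <;> first | omega | exact absurd (hnear hb) ha

theorem exists_mem_sdiff_forall_card_filter_le
    (hultra : ∀ a b c : E, a ≠ b → a ≠ c → b ≠ c → d a b ≤ max (d a c) (d b c))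
    {A B : Finset E} (hcard : #A = #B + 1) :
    ∃ u ∈ A \ B, ∀ t : ℝ,
      #((A.erase u).filter (t ≤ d u ·)) ≤ #(B.filter (t ≤ d u ·)) := by
  obtain ⟨u, hu, hball⟩ := exists_mem_sdiff_forall_card_filter_lt hultra (by omega : #B < #A)
  obtain ⟨huA, huB⟩ := mem_sdiff.mp hu
  refine ⟨u, hu, fun t => ?_⟩
  have hA : (A.erase u).filter (t ≤ d u ·) = A.filter (fun x => ¬(x = u ∨ d u x < t)) := by
    ext x
    simp only [mem_filter, mem_erase, not_or, not_lt]
    tauto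
  have hB : B.filter (t ≤ d u ·) = B.filter (fun x => ¬(x = u ∨ d u x < t)) := by
    ext x
    simp only [mem_filter, not_or, not_lt]
    exact ⟨fun h => ⟨h.1, fun hxu => huB (hxu ▸ h.1), h.2⟩, fun h => ⟨h.1, h.2.2⟩⟩
  have := hball t
  have := card_filter_add_card_filter_not (s := A) (fun x => x = u ∨ d u x < t)
  have := card_filter_add_card_filter_not (s := B) (fun x => x = u ∨ d u x < t)
  rw [hA, hB]
  omega

/-- Exchange argument: match the largest element of `S` with an element of `T` above it. -/
theorem exists_subset_card_eq_sum_le_of_card_filter_le {g : E → ℝ} {S T : Finset E}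
    (h : ∀ t : ℝ, #(S.filter (t ≤ g ·)) ≤ #(T.filter (t ≤ g ·))) {S' : Finset E}
    (hS' : S' ⊆ S) : ∃ T' ⊆ T, #T' = #S' ∧ ∑ x ∈ S', g x ≤ ∑ x ∈ T', g x := by
  induction S using Finset.strongInduction generalizing T S' with
  | H S ih =>
  rcases S.eq_empty_or_nonempty with rfl | hS
  · exact ⟨∅, empty_subset _, by simp [subset_empty.mp hS'], by simp [subset_empty.mp hS']⟩
  obtain ⟨x, hx, hxmax⟩ := S.exists_max_image g hS
  obtain ⟨y, hy, hxy⟩ : ∃ y ∈ T, g x ≤ g y := by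
    have hxS : 0 < #(S.filter (g x ≤ g ·)) :=
      card_pos.mpr ⟨x, mem_filter.mpr ⟨hx, le_rfl⟩⟩
    have hpos := hxS.trans_le (h (g x))
    obtain ⟨y, hy⟩ := card_pos.mp hpos
    exact ⟨y, (mem_filter.mp hy).1, (mem_filter.mp hy).2⟩
  have hdom : ∀ t : ℝ,
      #((S.erase x).filter (t ≤ g ·)) ≤ #((T.erase y).filter (t ≤ g ·)) := by
    intro t
    by_cases ht : t ≤ g x
    · have := h t
      rw [card_filter_eq_card_filter_erase_add hx, card_filter_eq_card_filter_erase_add hy,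
        if_pos ht, if_pos (ht.trans hxy)] at this
      omega
    · rw [filter_false_of_mem fun z hz hzt => ht (hzt.trans (hxmax z (mem_of_mem_erase hz)))]
      simp
  by_cases hxS' : x ∈ S'
  · obtain ⟨T', hT', hcard, hsum⟩ :=
      ih (S.erase x) (erase_ssubset hx) hdom (erase_subset_erase x hS')
    have hyT' : y ∉ T' := fun hyT' => (mem_erase.mp (hT' hyT')).1 rfl
    refine ⟨insert y T', insert_subset hy (hT'.trans (erase_subset y T)), ?_, ?_⟩
    · rw [card_insert_of_notMem hyT', hcard, card_erase_add_one hxS']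
    · rw [sum_insert hyT', ← add_sum_erase S' g hxS']
      linarith
  · obtain ⟨T', hT', hcard, hsum⟩ :=
      ih (S.erase x) (erase_ssubset hx) hdom (Finset.subset_erase.mpr ⟨hS', hxS'⟩)
    exact ⟨T', hT'.trans (erase_subset y T), hcard, hsum⟩

end Distances

section DistR

variable {E : Type*} [DecidableEq E] (d : E → E → ℝ) (r : ℕ)

/-- `distR` is a maximum: the truncated subtraction `#C - r` makes the case `#C ≤ r` agree
with the supremum over subsets of size `0`. -/
theorem isGreatest_distR (C : Finset E) (v : E) :
    IsGreatest {s | ∃ X ⊆ C, #X = #C - r ∧ s = ∑ x ∈ X, d v x} (distR d r C v) := by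
  set S := {s | ∃ X ⊆ C, #X = #C - r ∧ s = ∑ x ∈ X, d v x}
  have hfin : S.Finite :=
    ((C.powerset : Set (Finset E)).toFinite.image fun X => ∑ x ∈ X, d v x).subset
      fun s ⟨X, hX, _, hs⟩ => ⟨X, by simpa using hX, hs.symm⟩
  have hne : S.Nonempty := by
    obtain ⟨X, hX, hXc⟩ := exists_subset_card_eq (Nat.sub_le #C r)
    exact ⟨_, X, hX, hXc, rfl⟩
  have hsup : distR d r C v = sSup S := by
    unfold distR
    split_ifs with hr
    · have hS : S = {0} := by
        ext s
        constructor
        · rintro ⟨X, -, hXc, rfl⟩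
          simp [card_eq_zero.mp (hXc.trans (Nat.sub_eq_zero_of_le hr))]
        · rintro rfl
          exact ⟨∅, empty_subset C, by simp [Nat.sub_eq_zero_of_le hr], by simp⟩
      rw [hS, csSup_singleton]
    · rfl
  rw [hsup]
  exact ⟨hne.csSup_mem hfin, fun s hs => le_csSup hfin.bddAbove hs⟩

variable {d r}

theorem sum_le_distR {C X : Finset E} (hX : X ⊆ C) (hcard : #X = #C - r) (v : E) :
    ∑ x ∈ X, d v x ≤ distR d r C v :=
  (isGreatest_distR d r C v).2 ⟨X, hX, hcard, rfl⟩

theorem exists_sum_eq_distR (C : Finset E) (v : E) :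
    ∃ X ⊆ C, #X = #C - r ∧ ∑ x ∈ X, d v x = distR d r C v := by
  obtain ⟨X, hX, hcard, hs⟩ := (isGreatest_distR d r C v).1
  exact ⟨X, hX, hcard, hs.symm⟩

theorem distR_le_distR_of_card_filter_le {S T : Finset E} {v : E} (hcard : #S = #T)
    (h : ∀ t : ℝ, #(S.filter (t ≤ d v ·)) ≤ #(T.filter (t ≤ d v ·))) :
    distR d r S v ≤ distR d r T v := by
  obtain ⟨X, hXS, hXc, hX⟩ := exists_sum_eq_distR (d := d) (r := r) S v
  obtain ⟨Y, hYT, hYc, hsum⟩ := exists_subset_card_eq_sum_le_of_card_filter_le h hXS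
  rw [← hX]
  exact hsum.trans (sum_le_distR hYT (by rw [hYc, hXc, hcard]) v)

end DistR

theorem dist_eq_of_dist_lt {E : Type*} {d : E → E → ℝ}
    (hsymm : ∀ a b : E, a ≠ b → d a b = d b a)
    (hultra : ∀ a b c : E, a ≠ b → a ≠ c → b ≠ c → d a b ≤ max (d a c) (d b c))
    {a b y : E} (hab : a ≠ b) (hya : y ≠ a) (hyb : y ≠ b) (h : d a b < d b y) :
    d a y = d b y := by
  have h₁ := hultra a y b (Ne.symm hya) hab hyb
  have h₂ := hultra b y a (Ne.symm hyb) (Ne.symm hab) hya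
  rw [hsymm y b hyb] at h₁
  rw [hsymm b a (Ne.symm hab), hsymm y a hya] at h₂
  rcases le_max_iff.mp h₂ with h₂ | h₂
  · linarith
  · exact le_antisymm (h₁.trans (max_le h.le le_rfl)) h₂

section Ultrametric

variable {E : Type*} [DecidableEq E] {d : E → E → ℝ}

/-- Exchange points between optimal sets for the left-hand side. The key fact is that
`max (d a x) (d a b) = max (d b x) (d a b)`, so `a` and `b` see the points far from both alike. -/
theorem distR_add_distR_insert_le (hsymm : ∀ a b : E, a ≠ b → d a b = d b a)
    (hultra : ∀ a b c : E, a ≠ b → a ≠ c → b ≠ c → d a b ≤ max (d a c) (d b c))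
    (r : ℕ) {C : Finset E} {a b : E} (hab : a ≠ b) (ha : a ∉ C) (hb : b ∉ C) :
    distR d r C a + distR d r (insert a C) b ≤ distR d r C b + distR d r (insert b C) a := by
  obtain ⟨X, hXC, hXc, hX⟩ := exists_sum_eq_distR (d := d) (r := r) C a
  obtain ⟨Y, hYC, hYc, hY⟩ := exists_sum_eq_distR (d := d) (r := r) (insert a C) b
  rw [card_insert_of_notMem ha] at hYc
  rw [← hX, ← hY]
  suffices ∃ X' ⊆ C, #X' = #C - r ∧ ∃ Y' ⊆ insert b C, #Y' = #C + 1 - r ∧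
      ∑ x ∈ X, d a x + ∑ y ∈ Y, d b y ≤ ∑ x ∈ X', d b x + ∑ y ∈ Y', d a y by
    obtain ⟨X', hX'C, hX'c, Y', hY'C, hY'c, hle⟩ := this
    exact hle.trans (add_le_add (sum_le_distR hX'C hX'c b)
      (sum_le_distR hY'C (by rw [hY'c, card_insert_of_notMem hb]) a))
  have hba : d b a = d a b := hsymm b a (Ne.symm hab)
  have hbX : b ∉ X := fun h => hb (hXC h)
  by_cases haY : a ∈ Y
  · have hYpos := card_pos.mpr ⟨a, haY⟩
    refine ⟨Y.erase a, subset_insert_iff.mp hYC, by rw [card_erase_of_mem haY]; omega,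
      insert b X, insert_subset_insert b hXC, by rw [card_insert_of_notMem hbX]; omega, ?_⟩
    rw [sum_insert hbX, ← add_sum_erase Y _ haY, hba]
    linarith
  have hYC' : Y ⊆ C := fun y hy =>
    (mem_insert.mp (hYC hy)).resolve_left (by rintro rfl; exact haY hy)
  by_cases hYlow : ∃ y ∈ Y, d b y ≤ d a b
  · obtain ⟨y, hy, hyab⟩ := hYlow
    have hYpos := card_pos.mpr ⟨y, hy⟩
    refine ⟨Y.erase y, (erase_subset y Y).trans hYC', by rw [card_erase_of_mem hy]; omega,
      insert b X, insert_subset_insert b hXC, by rw [card_insert_of_notMem hbX]; omega, ?_⟩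
    rw [sum_insert hbX, ← add_sum_erase Y _ hy]
    linarith
  push Not at hYlow
  by_cases hXlow : ∃ x ∈ X, d a x ≤ d a b
  · obtain ⟨x, hx, hxab⟩ := hXlow
    have hXpos := card_pos.mpr ⟨x, hx⟩
    obtain ⟨y, hy, hyX⟩ := exists_mem_notMem_of_card_lt_card (s := X) (t := Y) (by omega)
    have hyC := hYC' hy
    have hyX' : y ∉ X.erase x := fun h => hyX (mem_of_mem_erase h)
    have hbyX : b ∉ insert y (X.erase x) := by
      rw [mem_insert, not_or]
      exact ⟨fun h => hb (h ▸ hyC), fun h => hbX (mem_of_mem_erase h)⟩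
    have hay : d a y = d b y := dist_eq_of_dist_lt hsymm hultra hab
      (fun h => ha (h ▸ hyC)) (fun h => hb (h ▸ hyC)) (hYlow y hy)
    refine ⟨Y.erase y, (erase_subset y Y).trans hYC', by rw [card_erase_of_mem hy]; omega,
      insert b (insert y (X.erase x)),
      insert_subset_insert b (insert_subset hyC ((erase_subset x X).trans hXC)), ?_, ?_⟩
    · rw [card_insert_of_notMem hbyX, card_insert_of_notMem hyX', card_erase_of_mem hx]
      omega
    · rw [sum_insert hbyX, sum_insert hyX', ← add_sum_erase Y _ hy, ← add_sum_erase X _ hx,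
        hay]
      linarith
  push Not at hXlow
  refine ⟨X, hXC, hXc, Y, hYC'.trans (subset_insert b C), hYc, le_of_eq ?_⟩
  have hXeq : ∑ x ∈ X, d a x = ∑ x ∈ X, d b x := sum_congr rfl fun x hx =>
    (dist_eq_of_dist_lt hsymm hultra (Ne.symm hab) (fun h => hb (h ▸ hXC hx))
      (fun h => ha (h ▸ hXC hx)) (by rw [hba]; exact hXlow x hx)).symm
  have hYeq : ∑ y ∈ Y, d b y = ∑ y ∈ Y, d a y := sum_congr rfl fun y hy =>
    (dist_eq_of_dist_lt hsymm hultra hab (fun h => ha (h ▸ hYC' hy))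
      (fun h => hb (h ▸ hYC' hy)) (hYlow y hy)).symm
  rw [hXeq, hYeq]

end Ultrametric

section Perimeter

variable {E : Type*} [DecidableEq E] {w : E → ℝ} {d : E → E → ℝ} {r : ℕ}

theorem perList_eq_of_perm (hsymm : ∀ a b : E, a ≠ b → d a b = d b a)
    (hultra : ∀ a b c : E, a ≠ b → a ≠ c → b ≠ c → d a b ≤ max (d a c) (d b c))
    {l l' : List E} (hperm : l.Perm l') (hl : l.Nodup) :
    perList w d r l = perList w d r l' := by
  induction hperm with
  | nil => rfl
  | cons x hperm ih =>
    rw [perList, perList, ih (List.nodup_cons.mp hl).2, List.toFinset_eq_of_perm _ _ hperm]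
  | swap x y l =>
    simp only [List.nodup_cons, List.mem_cons, not_or] at hl
    obtain ⟨⟨hyx, hyl⟩, hxl, -⟩ := hl
    have hswap : distR d r l.toFinset x + distR d r (insert x l.toFinset) y =
        distR d r l.toFinset y + distR d r (insert y l.toFinset) x :=
      le_antisymm
        (distR_add_distR_insert_le hsymm hultra r (Ne.symm hyx) (by simpa using hxl)
          (by simpa using hyl))
        (distR_add_distR_insert_le hsymm hultra r hyx (by simpa using hyl) (by simpa using hxl))
    simp only [perList, List.toFinset_cons]
    linarith
  | trans p₁ _ ih₁ ih₂ => rw [ih₁ hl, ih₂ (p₁.nodup_iff.mp hl)]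

theorem perR_insert (hsymm : ∀ a b : E, a ≠ b → d a b = d b a)
    (hultra : ∀ a b c : E, a ≠ b → a ≠ c → b ≠ c → d a b ≤ max (d a c) (d b c))
    {B : Finset E} {u : E} (hu : u ∉ B) :
    perR w d r (insert u B) = perR w d r B + w u + distR d r B u := by
  rw [perR, perList_eq_of_perm hsymm hultra (toList_insert hu) (nodup_toList _), perList,
    toList_toFinset, perR]

end Perimeter

theorem stmt8_general {E : Type*} [DecidableEq E] (w : E → ℝ) (d : E → E → ℝ)
    (hsymm : ∀ a b : E, a ≠ b → d a b = d b a)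
    (hultra : ∀ a b c : E, a ≠ b → a ≠ c → b ≠ c → d a b ≤ max (d a c) (d b c))
    (r : ℕ) (A B : Finset E) (hcard : A.card = B.card + 1) :
    ∃ u ∈ A \ B,
      perR w d r A + perR w d r B ≤ perR w d r (A.erase u) + perR w d r (insert u B) := by
  obtain ⟨u, hu, hdom⟩ := exists_mem_sdiff_forall_card_filter_le hultra hcard
  obtain ⟨huA, huB⟩ := mem_sdiff.mp hu
  have hdist : distR d r (A.erase u) u ≤ distR d r B u :=
    distR_le_distR_of_card_filter_le (by rw [card_erase_of_mem huA, hcard]; rfl) hdom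
  have hA : perR w d r A = perR w d r (A.erase u) + w u + distR d r (A.erase u) u := by
    rw [← perR_insert hsymm hultra (notMem_erase u A), insert_erase huA]
  refine ⟨u, hu, ?_⟩
  rw [hA, perR_insert hsymm hultra huB]
  linarith

theorem stmt8 {E : Type*} [DecidableEq E] [Fintype E] (w : E → ℝ) (d : E → E → ℝ)
    (hsymm : ∀ a b : E, a ≠ b → d a b = d b a)
    (hultra : ∀ a b c : E, a ≠ b → a ≠ c → b ≠ c → d a b ≤ max (d a c) (d b c))
    (r : ℕ) (A B : Finset E) (hcard : A.card = B.card + 1) :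
    ∃ u ∈ A \ B,
      perR w d r A + perR w d r B ≤ perR w d r (A.erase u) + perR w d r (insert u B) :=
  stmt8_general w d hsymm hultra r A B hcard
end

section
/- Let (E,w,d) be an ultra triple on a finite ground set E and let r be a non-negative integer. Let 𝓕_r be the collection of subsets A ⊆ E such that per_r(A) ≥ per_r(B) for all B ⊆ E with |B| = |A|. Then 𝓕_r is a strong greedoid: (i) ∅ ∈ 𝓕_r; (ii) if A ∈ 𝓕_r is nonempty then there is a ∈ A with A \ {a} ∈ 𝓕_r; (iii) if A, B ∈ 𝓕_r with |A| = |B| + 1 then there is a ∈ A \ B with B ∪ {a} ∈ 𝓕_r; (iv) moreover, in (iii) one can choose a ∈ A \ B such that both B ∪ {a} ∈ 𝓕_r and A \ {a} ∈ 𝓕_r. -/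
/-!
Adding `x ∉ C` raises `perR` by `w x + distR C x`; that this does not depend on the order of
insertion is the exchange identity
`distR C a + distR (C ∪ {a}) b = distR C b + distR (C ∪ {b}) a`,
which comes from the ultrametric inequality: `distR r C a - distR (r+1) C a` is a single
distance `d a x`, and it is `≤ max (d a b) (distR r C b - distR (r+1) C b)`.

Given `|A| = |B| + 1`, match `B` into `A` by successive projections: each `b ∈ B` goes to its
nearest point among the still unmatched part of `A` (to itself if it lies there). The point
`a ∈ A \ B` left over is, by the ultrametric inequality, at least as close to each image as to
its preimage, so `distR (A \ {a}) a ≤ distR B a`, i.e.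
`perR A + perR B ≤ perR (B ∪ {a}) + perR (A \ {a})`.
If `A` and `B` both have maximal perimeter for their sizes, this forces `B ∪ {a}` and `A \ {a}`
to have it as well, which is axiom (iv); the other axioms follow from it.
-/

open Finset

section distR

variable {E : Type*} [DecidableEq E] (d : E → E → ℝ) (r : ℕ)

theorem distR_eq_sup' (C : Finset E) (v : E) :
    distR d r C v = (C.powersetCard (C.card - r)).sup'
      (powersetCard_nonempty.2 (Nat.sub_le C.card r)) fun A => ∑ x ∈ A, d v x := by
  unfold distR
  split_ifs with h
  · simp [Nat.sub_eq_zero_of_le h]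
  · rw [sup'_eq_csSup_image]
    congr 1
    ext s
    simp [eq_comm, and_assoc]

theorem le_distR {A C : Finset E} (v : E) (hA : A ⊆ C) (hc : A.card = C.card - r) :
    ∑ x ∈ A, d v x ≤ distR d r C v := by
  rw [distR_eq_sup']
  exact le_sup' (fun A => ∑ x ∈ A, d v x) (mem_powersetCard.2 ⟨hA, hc⟩)

theorem exists_distR_eq (C : Finset E) (v : E) :
    ∃ A ⊆ C, A.card = C.card - r ∧ distR d r C v = ∑ x ∈ A, d v x := by
  obtain ⟨A, hA, hsum⟩ := exists_mem_eq_sup' _ fun A => ∑ x ∈ A, d v x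
  exact ⟨A, (mem_powersetCard.1 hA).1, (mem_powersetCard.1 hA).2, by rw [distR_eq_sup', hsum]⟩

theorem distR_of_card_le {C : Finset E} (h : C.card ≤ r) (v : E) : distR d r C v = 0 :=
  if_pos h

theorem distR_zero (C : Finset E) (v : E) : distR d 0 C v = ∑ x ∈ C, d v x := by
  obtain ⟨A, hAC, hcard, hsum⟩ := exists_distR_eq d 0 C v
  rw [hsum, eq_of_subset_of_card_le hAC (by omega)]

theorem distR_succ_insert {a b : E} {C : Finset E} (hb : b ∉ C) (hr : r + 1 ≤ C.card) :
    distR d (r + 1) (insert b C) a = max (distR d r C a) (d a b + distR d (r + 1) C a) := by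
  have hcard : (insert b C).card = C.card + 1 := card_insert_of_notMem hb
  apply le_antisymm
  · obtain ⟨A, hAC, hAcard, hsum⟩ := exists_distR_eq d (r + 1) (insert b C) a
    rw [hsum]
    by_cases hbA : b ∈ A
    · have hle := le_distR d (r + 1) a (C := C) (A := A.erase b)
        (fun x hx => (mem_insert.1 (hAC (mem_of_mem_erase hx))).resolve_left (ne_of_mem_erase hx))
        (by rw [card_erase_of_mem hbA]; omega)
      rw [← add_sum_erase A _ hbA]
      exact le_max_of_le_right (by linarith)
    · exact le_max_of_le_left (le_distR d r a
        (fun x hx => (mem_insert.1 (hAC hx)).resolve_left (ne_of_mem_of_not_mem hx hbA))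
        (by omega))
  · apply max_le
    · obtain ⟨A, hAC, hAcard, hsum⟩ := exists_distR_eq d r C a
      exact hsum ▸ le_distR d (r + 1) a (hAC.trans (subset_insert _ _)) (by omega)
    · obtain ⟨A, hAC, hAcard, hsum⟩ := exists_distR_eq d (r + 1) C a
      have hbA : b ∉ A := fun h => hb (hAC h)
      rw [hsum, ← sum_insert hbA]
      exact le_distR d (r + 1) a (insert_subset_insert _ hAC)
        (by rw [card_insert_of_notMem hbA]; omega)

theorem distR_image_le {f : E → E} {C : Finset E} {u v : E} (hf : Set.InjOn f C)
    (h : ∀ x ∈ C, d v (f x) ≤ d u x) : distR d r (C.image f) v ≤ distR d r C u := by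
  obtain ⟨T, hTC, hTcard, hsum⟩ := exists_distR_eq d r (C.image f) v
  set T' := C.filter (f · ∈ T)
  have hT' : T'.image f = T := by
    ext y
    simp only [T', mem_image, mem_filter]
    constructor
    · rintro ⟨x, ⟨-, hx⟩, rfl⟩
      exact hx
    · intro hy
      obtain ⟨x, hx, rfl⟩ := mem_image.1 (hTC hy)
      exact ⟨x, ⟨hx, hy⟩, rfl⟩
  have hinj : Set.InjOn f T' := hf.mono (by simp only [T', coe_filter]; exact fun x hx => hx.1)
  calc distR d r (C.image f) v = ∑ x ∈ T', d v (f x) := by rw [hsum, ← hT', sum_image hinj]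
    _ ≤ ∑ x ∈ T', d u x := sum_le_sum fun x hx => h x (mem_filter.1 hx).1
    _ ≤ distR d r C u := le_distR d r u (filter_subset _ _) <| by
        rw [← card_image_of_injOn hinj, hT', hTcard, card_image_of_injOn hf]

end distR

structure IsUltra {E : Type*} (d : E → E → ℝ) : Prop where
  symm : ∀ a b, a ≠ b → d a b = d b a
  le_max : ∀ a b c, a ≠ b → a ≠ c → b ≠ c → d a b ≤ max (d a c) (d b c)

namespace IsUltra

variable {E : Type*} {d : E → E → ℝ}

theorem dist_triangle_max (hd : IsUltra d) {a b c : E} (hab : a ≠ b) (hac : a ≠ c)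
    (hbc : b ≠ c) : d a c ≤ max (d a b) (d b c) := by
  have h := hd.le_max a c b hac hab hbc.symm
  rwa [hd.symm c b hbc.symm] at h

variable [DecidableEq E]

theorem distR_sub_distR_succ_le (hd : IsUltra d) (r : ℕ) {a b : E} {C : Finset E}
    (ha : a ∉ C) (hb : b ∉ C) (hab : a ≠ b) :
    distR d r C a - distR d (r + 1) C a ≤ max (distR d r C b - distR d (r + 1) C b) (d a b) := by
  by_cases hC : C.card ≤ r
  · simp only [distR_of_card_le d r hC, distR_of_card_le d (r + 1) (hC.trans r.le_succ),
      sub_self, le_max_left]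
  obtain ⟨A, hAC, hAcard, hAsum⟩ := exists_distR_eq d r C a
  have erase_le : ∀ x ∈ A, distR d r C a ≤ d a x + distR d (r + 1) C a := fun x hx => by
    rw [hAsum, ← add_sum_erase A _ hx]
    gcongr
    exact le_distR d (r + 1) a ((erase_subset _ _).trans hAC)
      (by rw [card_erase_of_mem hx]; omega)
  by_cases hnear : ∃ x ∈ A, d a x ≤ d a b
  · obtain ⟨x, hxA, hx⟩ := hnear
    exact le_max_of_le_right (by linarith [erase_le x hxA])
  push Not at hnear
  obtain ⟨A', hA'C, hA'card, hA'sum⟩ := exists_distR_eq d (r + 1) C b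
  obtain ⟨x, hxA, hxA'⟩ : ∃ x ∈ A, x ∉ A' :=
    not_subset.1 fun h => by have := card_le_card h; omega
  have hxC := hAC hxA
  have hx : d a x ≤ d b x :=
    (le_max_iff.1 (hd.dist_triangle_max hab (ne_of_mem_of_not_mem hxC ha).symm
      (ne_of_mem_of_not_mem hxC hb).symm)).resolve_left (hnear x hxA).not_ge
  have insert_le : d b x + distR d (r + 1) C b ≤ distR d r C b := by
    rw [hA'sum, ← sum_insert hxA']
    exact le_distR d r b (insert_subset hxC hA'C) (by rw [card_insert_of_notMem hxA']; omega)
  exact le_max_of_le_left (by linarith [erase_le x hxA])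

theorem distR_add_distR_insert_comm (hd : IsUltra d) (r : ℕ) {a b : E} {C : Finset E}
    (ha : a ∉ C) (hb : b ∉ C) (hab : a ≠ b) :
    distR d r C a + distR d r (insert a C) b = distR d r C b + distR d r (insert b C) a := by
  cases r with
  | zero =>
    simp only [distR_zero, sum_insert ha, sum_insert hb, hd.symm a b hab]
    ring
  | succ r =>
    by_cases hC : C.card ≤ r
    · have hins : ∀ {x}, x ∉ C → (insert x C).card ≤ r + 1 := fun hx => by
        rw [card_insert_of_notMem hx]; omega
      simp only [distR_of_card_le d (r + 1) (hC.trans r.le_succ),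
        distR_of_card_le d (r + 1) (hins ha), distR_of_card_le d (r + 1) (hins hb)]
    rw [distR_succ_insert d r ha (by omega), distR_succ_insert d r hb (by omega),
      hd.symm b a hab.symm]
    -- both sides are `distR (r+1) C a + distR (r+1) C b + max (marginal gain) (d a b)`
    have hmax : ∀ x y z : ℝ, max x (z + y) = max (x - y) z + y := fun x y z => by
      rw [← max_add_add_right, sub_add_cancel]
    have h₁ := hd.distR_sub_distR_succ_le r ha hb hab
    have h₂ := hd.distR_sub_distR_succ_le r hb ha hab.symm
    rw [hd.symm b a hab.symm] at h₂
    rw [hmax, hmax, le_antisymm (max_le h₁ (le_max_right _ _)) (max_le h₂ (le_max_right _ _))]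
    ring

theorem perList_perm (hd : IsUltra d) (w : E → ℝ) (r : ℕ) {l₁ l₂ : List E}
    (h : l₁.Perm l₂) (hnd : l₁.Nodup) : perList w d r l₁ = perList w d r l₂ := by
  induction h with
  | nil => rfl
  | cons x h ih =>
    simp only [perList, ih (List.nodup_cons.1 hnd).2, List.toFinset_eq_of_perm _ _ h]
  | swap x y l =>
    simp only [List.nodup_cons, List.mem_cons, not_or] at hnd
    obtain ⟨⟨hyx, hyl⟩, hxl, -⟩ := hnd
    have := hd.distR_add_distR_insert_comm r (mt List.mem_toFinset.1 hxl)
      (mt List.mem_toFinset.1 hyl) (Ne.symm hyx)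
    simp only [perList, List.toFinset_cons]
    linarith
  | trans h₁ _ ih₁ ih₂ => rw [ih₁ hnd, ih₂ (h₁.nodup hnd)]

theorem perR_insert (hd : IsUltra d) (w : E → ℝ) (r : ℕ) {x : E} {C : Finset E}
    (hx : x ∉ C) :
    perR w d r (insert x C) = perR w d r C + w x + distR d r C x := by
  rw [perR, hd.perList_perm w r (toList_insert hx) (nodup_toList _), perList, toList_toFinset,
    perR]

theorem exists_proj (hd : IsUltra d) {A : Finset E} (hA : A.Nonempty) (b : E) :
    ∃ p ∈ A, ∀ y ∈ A, y ≠ p → y ≠ b ∧ d y p ≤ d y b := by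
  by_cases hb : b ∈ A
  · exact ⟨b, hb, fun y _ hy => ⟨hy, le_rfl⟩⟩
  obtain ⟨p, hp, hmin⟩ := A.exists_min_image (d b) hA
  refine ⟨p, hp, fun y hy hyp => ?_⟩
  have hyb := ne_of_mem_of_not_mem hy hb
  refine ⟨hyb, ?_⟩
  calc d y p ≤ max (d y b) (d b p) :=
        hd.dist_triangle_max hyb hyp (ne_of_mem_of_not_mem hp hb).symm
    _ = d y b := max_eq_left ((hmin y hy).trans (hd.symm b y hyb.symm).le)

theorem exists_matching (hd : IsUltra d) {A B : Finset E} (hcard : A.card = B.card + 1) :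
    ∃ a ∈ A \ B, ∃ f : E → E,
      Set.InjOn f B ∧ B.image f = A.erase a ∧ ∀ x ∈ B, d a (f x) ≤ d a x := by
  induction B using Finset.induction_on generalizing A with
  | empty =>
    obtain ⟨a, rfl⟩ := card_eq_one.1 hcard
    exact ⟨a, by simp, id, by simp⟩
  | insert b B hbB ih =>
    rw [card_insert_of_notMem hbB] at hcard
    obtain ⟨p, hpA, hp⟩ := hd.exists_proj (card_pos.1 (by omega : 0 < A.card)) b
    obtain ⟨a, haAB, f, hf, himage, hle⟩ :=
      ih (A := A.erase p) (by rw [card_erase_of_mem hpA]; omega)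
    obtain ⟨⟨hap, haA⟩, haB⟩ : (a ≠ p ∧ a ∈ A) ∧ a ∉ B := by simpa using haAB
    obtain ⟨hab, hapb⟩ := hp a haA hap
    have hfg : Set.EqOn f (Function.update f b p) B := fun x hx =>
      (Function.update_of_ne (ne_of_mem_of_not_mem hx hbB) _ _).symm
    have himage' : B.image (Function.update f b p) = (A.erase a).erase p := by
      rw [← image_congr hfg, himage, erase_right_comm]
    refine ⟨a, by simp [haA, hab, haB], Function.update f b p, ?_, ?_, ?_⟩
    · rw [coe_insert, Set.injOn_insert (by simpa using hbB), Function.update_self,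
        ← coe_image, himage']
      exact ⟨hf.congr hfg, by simp⟩
    · rw [image_insert, himage', Function.update_self,
        insert_erase (mem_erase.2 ⟨Ne.symm hap, hpA⟩)]
    · intro x hx
      rcases mem_insert.1 hx with rfl | hx
      · rwa [Function.update_self]
      · rw [← hfg hx]
        exact hle x hx

theorem exists_distR_erase_le (hd : IsUltra d) (r : ℕ) {A B : Finset E}
    (hcard : A.card = B.card + 1) : ∃ a ∈ A \ B, distR d r (A.erase a) a ≤ distR d r B a := by
  obtain ⟨a, haAB, f, hf, himage, hle⟩ := hd.exists_matching hcard
  exact ⟨a, haAB, himage ▸ distR_image_le d r hf hle⟩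

theorem exists_perR_add_le (hd : IsUltra d) (w : E → ℝ) (r : ℕ) {A B : Finset E}
    (hcard : A.card = B.card + 1) :
    ∃ a ∈ A \ B,
      perR w d r A + perR w d r B ≤ perR w d r (insert a B) + perR w d r (A.erase a) := by
  obtain ⟨a, haAB, hle⟩ := hd.exists_distR_erase_le r hcard
  obtain ⟨haA, haB⟩ := mem_sdiff.1 haAB
  refine ⟨a, haAB, ?_⟩
  rw [← insert_erase haA, hd.perR_insert w r (notMem_erase a A), erase_insert (notMem_erase a A),
    hd.perR_insert w r haB]
  linarith

end IsUltra

theorem stmt9 {E : Type*} [DecidableEq E] [Fintype E] (w : E → ℝ) (d : E → E → ℝ)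
    (hsymm : ∀ a b : E, a ≠ b → d a b = d b a)
    (hultra : ∀ a b c : E, a ≠ b → a ≠ c → b ≠ c → d a b ≤ max (d a c) (d b c))
    (r : ℕ) (F : Finset E → Prop)
    (hF : ∀ A, F A ↔ ∀ B : Finset E, B.card = A.card → perR w d r B ≤ perR w d r A) :
    F ∅ ∧
    (∀ A, F A → A.Nonempty → ∃ a ∈ A, F (A.erase a)) ∧
    (∀ A B, F A → F B → A.card = B.card + 1 → ∃ a ∈ A \ B, F (insert a B)) ∧
    (∀ A B, F A → F B → A.card = B.card + 1 →
      ∃ a ∈ A \ B, F (insert a B) ∧ F (A.erase a)) := by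
  have exchange : ∀ A B, F A → F B → A.card = B.card + 1 →
      ∃ a ∈ A \ B, F (insert a B) ∧ F (A.erase a) := by
    intro A B hA hB hcard
    obtain ⟨a, haAB, hle⟩ := IsUltra.exists_perR_add_le ⟨hsymm, hultra⟩ w r hcard
    obtain ⟨haA, haB⟩ := mem_sdiff.1 haAB
    have hins : (insert a B).card = A.card := by rw [card_insert_of_notMem haB, hcard]
    have hera : (A.erase a).card = B.card := by rw [card_erase_of_mem haA]; omega
    have h₁ := (hF A).1 hA _ hins
    have h₂ := (hF B).1 hB _ hera
    refine ⟨a, haAB, (hF _).2 fun C hC => ?_, (hF _).2 fun C hC => ?_⟩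
    · linarith [(hF A).1 hA C (hC.trans hins)]
    · linarith [(hF B).1 hB C (hC.trans hera)]
  refine ⟨(hF ∅).2 fun B hB => by rw [card_eq_zero.1 hB], fun A hA hne => ?_,
    fun A B hA hB hcard => ?_, exchange⟩
  · obtain ⟨B, hB, hmax⟩ := exists_max_image ((univ : Finset E).powersetCard (A.card - 1))
      (perR w d r) (powersetCard_nonempty.2 ((Nat.sub_le _ _).trans (card_le_univ A)))
    have hBcard := (mem_powersetCard.1 hB).2
    obtain ⟨a, haAB, -, hera⟩ := exchange A B hA
      ((hF B).2 fun C hC => hmax C (mem_powersetCard.2 ⟨subset_univ C, hC.trans hBcard⟩))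
      (by have := card_pos.2 hne; omega)
    exact ⟨a, (mem_sdiff.1 haAB).1, hera⟩
  · obtain ⟨a, haAB, hins, -⟩ := exchange A B hA hB hcard
    exact ⟨a, haAB, hins⟩
end
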